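/- arXiv:2005.09505 — 2 statements merged into one kernel-verified Lean document; each statement's English description precedes it below -/
import Mathlib

section
/- Let Ω ⊆ ℂⁿ be a bounded domain, let u ∈ ℳ and let 0 < α < 1. Then the function u^α is tame. -/
open Complex Polynomial Filter Set Topology

noncomputable section

/-- `u` is plurisubharmonic on `Ω ⊆ ℂⁿ`: it is upper semicontinuous on `Ω`, takes values in
`[-∞, ∞)`, is not identically `-∞`, and on every closed disc of every complex line contained
in `Ω` it satisfies the maximum principle against real parts of complex polynomials
(an equivalent formulation of subharmonicity of the restriction to every complex line). -/
def IsPSH {n : ℕ} (Ω : Set (Fin n → ℂ)) (u : (Fin n → ℂ) → EReal) : Prop :=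
  UpperSemicontinuousOn u Ω ∧
  (∀ z ∈ Ω, u z ≠ ⊤) ∧
  (∃ z ∈ Ω, u z ≠ ⊥) ∧
  ∀ z ∈ Ω, ∀ w : Fin n → ℂ, ∀ r : ℝ, 0 < r →
    (∀ ζ : ℂ, ‖ζ‖ ≤ r → z + ζ • w ∈ Ω) →
    ∀ p : Polynomial ℂ,
      (∀ ζ : ℂ, ‖ζ‖ = r → u (z + ζ • w) ≤ (((p.eval ζ).re : ℝ) : EReal)) →
      ∀ ζ : ℂ, ‖ζ‖ ≤ r → u (z + ζ • w) ≤ (((p.eval ζ).re : ℝ) : EReal)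

/-- `v` is plurisuperharmonic on `Ω` iff `-v` is plurisubharmonic on `Ω`. -/
def IsPSupH {n : ℕ} (Ω : Set (Fin n → ℂ)) (v : (Fin n → ℂ) → EReal) : Prop :=
  IsPSH Ω (fun z => -(v z))

/-- `f` belongs to the class `ℳ`: `f : Ω → [0, +∞]` admits a plurisuperharmonic
majorant on `Ω`. -/
def MemM {n : ℕ} (Ω : Set (Fin n → ℂ)) (f : (Fin n → ℂ) → EReal) : Prop :=
  (∀ z ∈ Ω, 0 ≤ f z) ∧ ∃ v, IsPSupH Ω v ∧ ∀ z ∈ Ω, f z ≤ v z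

/-- The reduced function `R_λ f`: the pointwise infimum of all plurisuperharmonic
majorants of `(f - λ)⁺ = max {f - λ, 0}` on `Ω`. -/
def Rop {n : ℕ} (Ω : Set (Fin n → ℂ)) (f : (Fin n → ℂ) → EReal) (lam : ℝ)
    (z : Fin n → ℂ) : EReal :=
  sInf { y | ∃ v, IsPSupH Ω v ∧ (∀ ζ ∈ Ω, max (f ζ - (lam : EReal)) 0 ≤ v ζ) ∧ y = v z }

/-- Lower semicontinuous regularization of `g` relative to the set `A`:
`g_*(z) = liminf_{A ∋ ζ → z} g(ζ)`. -/
def lscReg {n : ℕ} (A : Set (Fin n → ℂ)) (g : (Fin n → ℂ) → EReal)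
    (z : Fin n → ℂ) : EReal :=
  liminf g (nhdsWithin z A)

/-- Upper semicontinuous regularization of `g` relative to the set `A`:
`g*(z) = limsup_{A ∋ ζ → z} g(ζ)`. -/
def uscReg {n : ℕ} (A : Set (Fin n → ℂ)) (g : (Fin n → ℂ) → EReal)
    (z : Fin n → ℂ) : EReal :=
  limsup g (nhdsWithin z A)

/-- `S_λ f`: the lower semicontinuous regularization of `R_λ f` on `Ω`. -/
def Slam {n : ℕ} (Ω : Set (Fin n → ℂ)) (f : (Fin n → ℂ) → EReal) (lam : ℝ) :
    (Fin n → ℂ) → EReal :=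
  lscReg Ω (Rop Ω f lam)

/-- The operator `S`: the lower semicontinuous regularization of
`lim_{λ → ∞} S_λ f`; since `λ ↦ S_λ f` is decreasing on `λ ≥ 0`, this limit is the
infimum over `λ ≥ 0`. -/
def Sop {n : ℕ} (Ω : Set (Fin n → ℂ)) (f : (Fin n → ℂ) → EReal) :
    (Fin n → ℂ) → EReal :=
  lscReg Ω (fun z => ⨅ (lam : ℝ) (_ : 0 ≤ lam), Slam Ω f lam z)

/-- `f` is tame on `Ω` if `S f ≡ 0`. -/
def Tame {n : ℕ} (Ω : Set (Fin n → ℂ)) (f : (Fin n → ℂ) → EReal) : Prop :=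
  ∀ z ∈ Ω, Sop Ω f z = 0

/-- `E` is a pluripolar subset of `Ω`: `E ⊆ {w = -∞}` for some plurisubharmonic `w` on `Ω`. -/
def Pluripolar {n : ℕ} (Ω : Set (Fin n → ℂ)) (E : Set (Fin n → ℂ)) : Prop :=
  E ⊆ Ω ∧ ∃ w, IsPSH Ω w ∧ ∀ z ∈ E, w z = ⊥

/-- The power `x ^ α` for `x ∈ [0, +∞] ⊆ EReal` and a real exponent `α`. -/
def erealRpow (x : EReal) (α : ℝ) : EReal :=
  if x = ⊤ then ⊤ else ((x.toReal ^ α : ℝ) : EReal)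

/-!
Let `v` be a plurisuperharmonic majorant of `u`. Since `x ^ α = o(x)`, for every `ε > 0` there is
`λ ≥ 0` with `(u ^ α - λ)⁺ ≤ ε v`, and `ε v` is plurisuperharmonic, so
`S_λ (u ^ α) ≤ R_λ (u ^ α) ≤ ε v`; letting `ε → 0`, the limit `lim_λ S_λ (u ^ α)` vanishes wherever
`v < ∞`. The set `{v = ∞}` has empty interior: the plurisubharmonic function `-v` cannot be `-∞`
near one point of a circle without being `-∞` at its centre (compare it with real parts of
polynomials approximating the Poisson kernel), so by connectedness it would be `-∞` everywhere.
Hence the lower regularization `S (u ^ α)` vanishes.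
-/

lemma EReal.continuous_coe_mul {c : ℝ} (hc : c ≠ 0) :
    Continuous fun x : EReal => (c : EReal) * x :=
  continuous_iff_continuousAt.2 fun _ =>
    (EReal.continuousAt_mul (.inl (EReal.coe_ne_zero.2 hc)) (.inl (EReal.coe_ne_zero.2 hc))
      (.inl (EReal.coe_ne_bot c)) (.inl (EReal.coe_ne_top c))).comp
      (continuous_const.prodMk continuous_id).continuousAt

lemma EReal.le_zero_of_forall_le_coe_mul {x y : EReal} (hy : y ≠ ⊤)
    (h : ∀ ε : ℝ, 0 < ε → x ≤ ε * y) : x ≤ 0 := by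
  induction y with
  | bot => exact (h 1 one_pos).trans (by simp)
  | top => exact absurd rfl hy
  | coe y =>
    have hlim : Tendsto (fun ε : ℝ => (ε : EReal) * y) (𝓝[>] 0) (𝓝 0) := by
      simpa [Function.comp_def] using (continuous_coe_real_ereal.tendsto _).comp
        ((tendsto_id.mul_const y).mono_left (nhdsWithin_le_nhds (a := (0 : ℝ)) (s := Ioi 0)))
    exact ge_of_tendsto hlim (eventually_mem_nhdsWithin.mono h)

lemma IsPSH.const_mul {n : ℕ} {Ω : Set (Fin n → ℂ)} {w : (Fin n → ℂ) → EReal}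
    (hw : IsPSH Ω w) {c : ℝ} (hc : 0 < c) : IsPSH Ω fun z => (c : EReal) * w z := by
  obtain ⟨husc, hne_top, ⟨z₀, hz₀, hz₀_ne⟩, hmax⟩ := hw
  have hc' : (0 : EReal) < c := EReal.coe_pos.2 hc
  have hscale (x : EReal) (y : ℝ) : (c : EReal) * x ≤ y ↔ x ≤ ((y / c : ℝ) : EReal) := by
    rw [EReal.coe_div, EReal.le_div_iff_mul_le hc' (EReal.coe_ne_top c), mul_comm]
  refine ⟨(EReal.continuous_coe_mul hc.ne').comp_upperSemicontinuousOn husc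
      fun _ _ h => mul_le_mul_of_nonneg_left h hc'.le, fun z hz => ?_, ⟨z₀, hz₀, ?_⟩, ?_⟩
  · simp [EReal.mul_ne_top, hc'.le, hne_top z hz]
  · simp [EReal.mul_ne_bot, hc'.le, hz₀_ne]
  · intro z hz d r hr hdisc p hp ζ hζ
    have hre (ξ : ℂ) : ((C ((c⁻¹ : ℝ) : ℂ) * p).eval ξ).re = (p.eval ξ).re / c := by
      rw [eval_mul, eval_C, Complex.re_ofReal_mul, div_eq_inv_mul]
    rw [hscale, ← hre]
    exact hmax z hz d r hr hdisc _ (fun ξ hξ => by rw [hre, ← hscale]; exact hp ξ hξ) ζ hζ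

lemma IsPSupH.const_mul {n : ℕ} {Ω : Set (Fin n → ℂ)} {v : (Fin n → ℂ) → EReal}
    (hv : IsPSupH Ω v) {c : ℝ} (hc : 0 < c) : IsPSupH Ω fun z => (c : EReal) * v z := by
  simpa only [IsPSupH, mul_neg] using IsPSH.const_mul hv hc

lemma Complex.re_one_add_div_one_sub (w : ℂ) :
    ((1 + w) / (1 - w)).re = (1 - ‖w‖ ^ 2) / ‖1 - w‖ ^ 2 := by
  rw [Complex.div_re, ← Complex.normSq_eq_norm_sq, ← Complex.normSq_eq_norm_sq,
    Complex.normSq_apply w]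
  simp only [add_re, one_re, sub_re, add_im, one_im, sub_im]
  ring

lemma Complex.re_two_mul_geom_sum_sub_one_le {w : ℂ} (hw : w ≠ 1) (N : ℕ) :
    (2 * ∑ k ∈ Finset.range N, w ^ k - 1).re ≤
      (1 - ‖w‖ ^ 2) / ‖1 - w‖ ^ 2 + 2 * ‖w‖ ^ N / ‖1 - w‖ := by
  have h1w : 1 - w ≠ 0 := sub_ne_zero.2 hw.symm
  have hsum : 2 * ∑ k ∈ Finset.range N, w ^ k - 1 = (1 + w) / (1 - w) - 2 * w ^ N / (1 - w) := by
    rw [geom_sum_eq hw, ← neg_sub 1 (w ^ N), ← neg_sub 1 w, neg_div_neg_eq]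
    field_simp
    ring
  have htail : ‖2 * w ^ N / (1 - w)‖ = 2 * ‖w‖ ^ N / ‖1 - w‖ := by
    rw [norm_div, norm_mul, norm_pow, Complex.norm_two]
  rw [hsum, sub_re, re_one_add_div_one_sub, ← htail]
  linarith [neg_le_abs (2 * w ^ N / (1 - w)).re, Complex.abs_re_le_norm (2 * w ^ N / (1 - w))]

lemma exists_polynomial_re_peak {δ K : ℝ} (hδ : 0 < δ) (hK : 0 < K) :
    ∃ q : ℂ[X], (q.eval 0).re = K ∧
      ∀ ζ : ℂ, ‖ζ‖ = 1 → δ ≤ ‖ζ - 1‖ → (q.eval ζ).re ≤ 1 := by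
  set η := min (min (δ / 2) (δ ^ 2 / (16 * K))) (1 / 2)
  have hη : 0 < η := lt_min (lt_min (by positivity) (by positivity)) (by norm_num)
  have hηδ : η ≤ δ / 2 := (min_le_left _ _).trans (min_le_left _ _)
  have hηK : 16 * K * η ≤ δ ^ 2 := by
    have := (le_div_iff₀ (by positivity)).1 ((min_le_left _ _).trans (min_le_right _ _) :
      η ≤ δ ^ 2 / (16 * K))
    linarith
  have hη1 : η ≤ 1 / 2 := min_le_right _ _
  set r := 1 - η with hr
  have hr0 : 0 < r := by linarith
  obtain ⟨m, hm⟩ := exists_pow_lt_of_lt_one (show 0 < δ / (8 * K) by positivity)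
    (show r < 1 by linarith)
  -- `2 ∑ (rζ)^k - 1` truncates the Poisson kernel `(1 + rζ) / (1 - rζ)`, whose real part
  -- `(1 - r²) / ‖1 - rζ‖²` is small away from `ζ = 1` when `r` is close to `1`.
  refine ⟨C (K : ℂ) * (C 2 * ∑ k ∈ Finset.range (m + 1), (C (r : ℂ) * X) ^ k - 1), ?_, ?_⟩
  · norm_num [Finset.sum_range_succ', eval_finsetSum]
  intro ζ hζ hζδ
  simp only [eval_mul, eval_sub, eval_C, eval_finsetSum, eval_pow, eval_X, eval_one,
    Complex.re_ofReal_mul]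
  set w := (r : ℂ) * ζ
  have hw : ‖w‖ = r := by simp [w, hζ, abs_of_pos hr0]
  have hw1 : w ≠ 1 := fun h => by rw [h, norm_one] at hw; linarith
  have hdist : δ / 2 ≤ ‖1 - w‖ := by
    have hζw : ‖ζ - w‖ = η := by
      rw [show ζ - w = (η : ℂ) * ζ by simp only [w, hr]; push_cast; ring, norm_mul, hζ,
        Complex.norm_real, Real.norm_of_nonneg hη.le, mul_one]
    have := norm_sub_le_norm_sub_add_norm_sub ζ w 1
    rw [norm_sub_rev w] at this
    linarith
  have hr2 : 1 - r ^ 2 ≤ 2 * η := by nlinarith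
  have hrm : r ^ (m + 1) ≤ δ / (8 * K) :=
    (pow_le_pow_of_le_one hr0.le (by linarith) (Nat.le_succ m)).trans hm.le
  calc K * (2 * ∑ k ∈ Finset.range (m + 1), w ^ k - 1).re
      ≤ K * ((1 - r ^ 2) / ‖1 - w‖ ^ 2 + 2 * r ^ (m + 1) / ‖1 - w‖) := by
        rw [← hw]
        exact mul_le_mul_of_nonneg_left (Complex.re_two_mul_geom_sum_sub_one_le hw1 _) hK.le
    _ ≤ K * (2 * η / (δ / 2) ^ 2 + 2 * (δ / (8 * K)) / (δ / 2)) := by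
        have : 0 ≤ 1 - r ^ 2 := by nlinarith
        gcongr
    _ = 8 * K * η / δ ^ 2 + 1 / 2 := by field_simp; ring
    _ ≤ 1 := by
        have : 8 * K * η / δ ^ 2 ≤ 1 / 2 := by
          rw [div_le_iff₀ (by positivity)]
          linarith
        linarith

section Plurisubharmonic

variable {n : ℕ} {Ω : Set (Fin n → ℂ)} {w : (Fin n → ℂ) → EReal}

lemma IsPSH.exists_le_on_circle (hw : IsPSH Ω w) {z d : Fin n → ℂ}
    (hcircle : ∀ ζ : ℂ, ‖ζ‖ = 1 → z + ζ • d ∈ Ω) :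
    ∃ M : ℝ, ∀ ζ : ℂ, ‖ζ‖ = 1 → w (z + ζ • d) ≤ M := by
  set φ : ℂ → Fin n → ℂ := fun ζ => z + ζ • d
  have hK : IsCompact (φ '' Metric.sphere 0 1) := (isCompact_sphere (0 : ℂ) 1).image (by fun_prop)
  have hKΩ : φ '' Metric.sphere 0 1 ⊆ Ω := by
    rintro _ ⟨ζ, hζ, rfl⟩
    exact hcircle ζ (by simpa using hζ)
  obtain ⟨_, ⟨ζ₀, hζ₀, rfl⟩, hmax⟩ :=
    (hw.1.mono hKΩ).exists_isMaxOn ⟨φ 1, mem_image_of_mem φ (by simp)⟩ hK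
  exact ⟨(w (φ ζ₀)).toReal, fun ζ hζ =>
    (hmax (mem_image_of_mem φ (by simpa using hζ))).trans
      (EReal.le_coe_toReal (hw.2.1 _ (hKΩ (mem_image_of_mem φ hζ₀))))⟩

lemma IsPSH.eq_bot_of_eventually_eq_bot (hw : IsPSH Ω w) {z d : Fin n → ℂ}
    (hdisc : ∀ ζ : ℂ, ‖ζ‖ ≤ 1 → z + ζ • d ∈ Ω) (hbot : ∀ᶠ y in 𝓝 (z + d), w y = ⊥) :
    w z = ⊥ := by
  obtain ⟨δ, hδ, harc⟩ : ∃ δ > 0, ∀ ζ : ℂ, dist ζ 1 < δ → w (z + ζ • d) = ⊥ := by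
    have : Tendsto (fun ζ : ℂ => z + ζ • d) (𝓝 1) (𝓝 (z + d)) := by
      simpa using (show Continuous fun ζ : ℂ => z + ζ • d by fun_prop).tendsto 1
    exact Metric.eventually_nhds_iff.1 (this.eventually hbot)
  obtain ⟨M, hM⟩ := hw.exists_le_on_circle fun ζ hζ => hdisc ζ hζ.le
  have hle : ∀ K : ℝ, 0 < K → w z ≤ ((M + 1 - K : ℝ) : EReal) := by
    intro K hK
    obtain ⟨q, hq0, hq⟩ := exists_polynomial_re_peak hδ hK
    have hcirc : ∀ ζ : ℂ, ‖ζ‖ = 1 →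
        w (z + ζ • d) ≤ (((C ((M + 1 : ℝ) : ℂ) - q).eval ζ).re : EReal) := by
      intro ζ hζ
      rcases lt_or_ge (dist ζ 1) δ with hnear | hfar
      · rw [harc ζ hnear]
        exact bot_le
      · refine (hM ζ hζ).trans (EReal.coe_le_coe_iff.2 ?_)
        rw [eval_sub, eval_C, sub_re, Complex.ofReal_re]
        linarith [hq ζ hζ (by rwa [← dist_eq_norm])]
    have := hw.2.2.2 z (by simpa using hdisc 0 (by simp)) d 1 one_pos hdisc _ hcirc 0 (by simp)
    rwa [zero_smul, add_zero, eval_sub, eval_C, sub_re, Complex.ofReal_re, hq0] at this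
  refine (EReal.eq_bot_iff_forall_lt _).2 fun y => ?_
  calc w z ≤ ((M + 1 - max (M + 2 - y) 1 : ℝ) : EReal) := hle _ (lt_max_of_lt_right one_pos)
    _ < y := EReal.coe_lt_coe_iff.2 (by linarith [le_max_left (M + 2 - y) 1])

lemma IsPSH.frequently_ne_bot (hΩo : IsOpen Ω) (hΩc : IsPreconnected Ω) (hw : IsPSH Ω w)
    {z : Fin n → ℂ} (hz : z ∈ Ω) : ∃ᶠ y in 𝓝 z, w y ≠ ⊥ := by
  set A := {x | ∀ᶠ y in 𝓝 x, w y = ⊥}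
  have hclosure : closure A ∩ Ω ⊆ A := by
    rintro x ⟨hxA, hxΩ⟩
    obtain ⟨ε, hε, hball⟩ := Metric.isOpen_iff.1 hΩo x hxΩ
    obtain ⟨z₁, hz₁A, hxz₁⟩ := Metric.mem_closure_iff.1 hxA (ε / 3) (by positivity)
    refine Metric.eventually_nhds_iff.2 ⟨ε / 3, by positivity, fun y hy => ?_⟩
    refine hw.eq_bot_of_eventually_eq_bot (d := z₁ - y) (fun ζ hζ => hball ?_)
      (by rwa [add_sub_cancel])
    have hyz₁ : ‖z₁ - y‖ < 2 * ε / 3 := by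
      rw [← dist_eq_norm]
      linarith [dist_triangle_right z₁ y x, dist_comm x z₁]
    rw [Metric.mem_ball, dist_eq_norm, add_sub_right_comm]
    calc ‖y - x + ζ • (z₁ - y)‖ ≤ ‖y - x‖ + ‖z₁ - y‖ :=
          (norm_add_le _ _).trans (add_le_add_right (by
            rw [norm_smul]; exact mul_le_of_le_one_left (norm_nonneg _) hζ) _)
      _ < ε := by linarith [dist_eq_norm y x]
  by_contra h
  have hΩA : Ω ⊆ A := hΩc.subset_of_closure_inter_subset isOpen_setOfPred_eventually_nhds
    ⟨z, hz, (not_frequently.1 h).mono fun _ => not_not.1⟩ hclosure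
  obtain ⟨z₀, hz₀, hne⟩ := hw.2.2.1
  exact hne (hΩA hz₀).self_of_nhds

end Plurisubharmonic

lemma Real.exists_rpow_le_mul_add {α ε : ℝ} (hα0 : 0 ≤ α) (hα1 : α < 1) (hε : 0 < ε) :
    ∃ lam : ℝ, 0 ≤ lam ∧ ∀ x : ℝ, 0 ≤ x → x ^ α ≤ ε * x + lam := by
  obtain ⟨X, hX⟩ := eventually_atTop.1 <|
    (tendsto_rpow_neg_atTop (sub_pos.2 hα1)).eventually (gt_mem_nhds hε)
  set X₀ := max X 1
  refine ⟨X₀ ^ α, by positivity, fun x hx => ?_⟩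
  rcases le_total x X₀ with hxX | hXx
  · nlinarith [Real.rpow_le_rpow hx hxX hα0]
  · have hx0 : 0 < x := lt_of_lt_of_le one_pos ((le_max_right _ _).trans hXx)
    have hsmall : x ^ (α - 1) < ε := by
      simpa using hX x ((le_max_left _ _).trans hXx)
    have : x ^ α = x ^ (α - 1) * x := by
      rw [Real.rpow_sub_one hx0.ne', div_mul_cancel₀ _ hx0.ne']
    rw [this]
    nlinarith [mul_le_mul_of_nonneg_right hsmall.le hx0.le,
      Real.rpow_nonneg (zero_le_one.trans (le_max_right X 1)) α]

lemma exists_max_erealRpow_sub_le_mul {α ε : ℝ} (hα0 : 0 ≤ α) (hα1 : α < 1) (hε : 0 < ε) :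
    ∃ lam : ℝ, 0 ≤ lam ∧ ∀ a b : EReal, 0 ≤ a → a ≤ b →
      max (erealRpow a α - lam) 0 ≤ (ε : EReal) * b := by
  obtain ⟨lam, hlam, hlin⟩ := Real.exists_rpow_le_mul_add hα0 hα1 hε
  refine ⟨lam, hlam, fun a b ha hab => ?_⟩
  induction b with
  | bot => exact absurd (ha.trans hab) (by simp)
  | top => rw [EReal.coe_mul_top_of_pos hε]; exact le_top
  | coe y =>
    lift a to ℝ using ⟨ne_top_of_le_ne_top (EReal.coe_ne_top y) hab,
      ne_bot_of_le_ne_bot EReal.zero_ne_bot ha⟩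
    have ha' : 0 ≤ a := EReal.coe_nonneg.1 ha
    have hay : a ≤ y := EReal.coe_le_coe_iff.1 hab
    rw [erealRpow, if_neg (EReal.coe_ne_top a), EReal.toReal_coe, ← EReal.coe_sub, ← EReal.coe_mul,
      ← EReal.coe_zero]
    exact max_le (EReal.coe_le_coe_iff.2 (by nlinarith [hlin a ha']))
      (EReal.coe_le_coe_iff.2 (mul_nonneg hε.le (ha'.trans hay)))

section Regularization

variable {n : ℕ} {Ω : Set (Fin n → ℂ)}

lemma lscReg_le_self {g : (Fin n → ℂ) → EReal} {z : Fin n → ℂ} (hz : z ∈ Ω) :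
    lscReg Ω g z ≤ g z :=
  liminf_le_of_frequently_le
    ((frequently_pure (p := fun x => g x ≤ g z)).2 le_rfl |>.filter_mono (pure_le_nhdsWithin hz))
    (by isBoundedDefault)

lemma le_lscReg {g : (Fin n → ℂ) → EReal} {c : EReal} (h : ∀ z ∈ Ω, c ≤ g z)
    (z : Fin n → ℂ) : c ≤ lscReg Ω g z :=
  le_liminf_of_le (by isBoundedDefault) (eventually_mem_nhdsWithin.mono h)

variable {f : (Fin n → ℂ) → EReal} {lam : ℝ}

lemma Rop_nonneg {z : Fin n → ℂ} (hz : z ∈ Ω) : 0 ≤ Rop Ω f lam z :=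
  le_sInf <| by
    rintro _ ⟨v, -, hmaj, rfl⟩
    exact (le_max_right _ _).trans (hmaj z hz)

lemma Rop_le {v : (Fin n → ℂ) → EReal} (hv : IsPSupH Ω v)
    (hmaj : ∀ ζ ∈ Ω, max (f ζ - lam) 0 ≤ v ζ) (z : Fin n → ℂ) : Rop Ω f lam z ≤ v z :=
  sInf_le ⟨v, hv, hmaj, rfl⟩

lemma Sop_nonneg (z : Fin n → ℂ) : 0 ≤ Sop Ω f z :=
  le_lscReg (fun _ _ => le_iInf₂ fun _ _ => le_lscReg (fun _ => Rop_nonneg) _) z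

lemma iInf_Slam_le_zero {v : (Fin n → ℂ) → EReal} (hv : IsPSupH Ω v)
    (hmaj : ∀ ε : ℝ, 0 < ε → ∃ lam : ℝ, 0 ≤ lam ∧ ∀ ζ ∈ Ω, max (f ζ - lam) 0 ≤ (ε : EReal) * v ζ)
    {z : Fin n → ℂ} (hz : z ∈ Ω) (hvz : v z ≠ ⊤) :
    ⨅ (lam : ℝ) (_ : 0 ≤ lam), Slam Ω f lam z ≤ 0 :=
  EReal.le_zero_of_forall_le_coe_mul hvz fun ε hε => by
    obtain ⟨lam, hlam, h⟩ := hmaj ε hε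
    exact (iInf₂_le lam hlam).trans ((lscReg_le_self hz).trans (Rop_le (hv.const_mul hε) h z))

theorem tame_of_forall_exists_le_mul (hΩo : IsOpen Ω) (hΩc : IsPreconnected Ω)
    {v : (Fin n → ℂ) → EReal} (hv : IsPSupH Ω v)
    (hmaj : ∀ ε : ℝ, 0 < ε → ∃ lam : ℝ, 0 ≤ lam ∧ ∀ ζ ∈ Ω, max (f ζ - lam) 0 ≤ (ε : EReal) * v ζ) :
    Tame Ω f := by
  intro z hz
  have hfinite : ∃ᶠ ζ in 𝓝[Ω] z, ζ ∈ Ω ∧ v ζ ≠ ⊤ := by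
    rw [hΩo.nhdsWithin_eq hz]
    refine ((IsPSH.frequently_ne_bot hΩo hΩc hv hz).and_eventually (hΩo.mem_nhds hz)).mono ?_
    rintro ζ ⟨hne, hζ⟩
    exact ⟨hζ, fun h => hne (by rw [h, EReal.neg_top])⟩
  exact le_antisymm
    (liminf_le_of_frequently_le (hfinite.mono fun ζ hζ => iInf_Slam_le_zero hv hmaj hζ.1 hζ.2)
      (by isBoundedDefault))
    (Sop_nonneg z)

end Regularization

theorem statement8_general {n : ℕ} (Ω : Set (Fin n → ℂ))
    (hΩo : IsOpen Ω) (hΩc : IsConnected Ω)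
    (u : (Fin n → ℂ) → EReal) (hu : MemM Ω u) (α : ℝ) (hα0 : 0 < α) (hα1 : α < 1) :
    Tame Ω (fun z => erealRpow (u z) α) := by
  obtain ⟨hu0, v, hv, huv⟩ := hu
  refine tame_of_forall_exists_le_mul hΩo hΩc.isPreconnected hv fun ε hε => ?_
  obtain ⟨lam, hlam, h⟩ := exists_max_erealRpow_sub_le_mul hα0.le hα1 hε
  exact ⟨lam, hlam, fun ζ hζ => h _ _ (hu0 ζ hζ) (huv ζ hζ)⟩

/-- Corollary 3.3, first part: let `Ω ⊆ ℂⁿ` be a bounded domain, let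
`u ∈ ℳ` and let `0 < α < 1`. Then `u^α` is tame. -/
theorem statement8 {n : ℕ} (Ω : Set (Fin n → ℂ))
    (hΩo : IsOpen Ω) (hΩc : IsConnected Ω) (hΩb : Bornology.IsBounded Ω)
    (u : (Fin n → ℂ) → EReal) (hu : MemM Ω u) (α : ℝ) (hα0 : 0 < α) (hα1 : α < 1) :
    Tame Ω (fun z => erealRpow (u z) α) :=
  statement8_general Ω hΩo hΩc u hu α hα0 hα1
end
end

section
/- Let 𝔹 = {(z, w) ∈ ℂ² : |z|² + |w|² < 1} be the unit ball, let 0 < α ≤ 1, and let φ(z, w) = (−log|z|)^α (with value +∞ when z = 0). Then the Perron–Bremermann envelope of φ over the plurisubharmonic functions on 𝔹 is given explicitly by Pφ(z, w) = (−(1/2)·log(1 − |w|²))^α for all (z, w) ∈ 𝔹. In particular, the function U(z, w) = (−(1/2)·log(1 − |w|²))^α is plurisubharmonic on 𝔹, and every plurisubharmonic u on 𝔹 with u ≤ φ satisfies u ≤ U. -/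
/-!
Write `U(z, w) = V(log |w|)` with `V(τ) = (-(1/2) log (1 - e^{2τ}))^α`, which is convex and
increasing on `τ < 0`. Against a tangent line `a τ + b` of `V` (`a > 0`), the inequality
`U ≤ Re P` on a circle in a complex line becomes `|w| · |exp ((b - P) / a)| ≤ 1`, so the maximum
modulus principle makes `U` plurisubharmonic. Since `|z|² < 1 - |w|²` on the ball, `U ≤ φ`.
Conversely, in the slice `{w = w₀}` a plurisubharmonic `u ≤ φ` is at most `(-log r)^α` on the
circle `|z| = r`, hence inside it, and `r → √(1 - |w₀|²)` gives `u ≤ U`.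
-/

open Complex Polynomial Filter Set Topology

noncomputable section

/-- The open unit ball in `ℂ²`. -/
def unitBall2 : Set (Fin 2 → ℂ) := { p | ‖p 0‖ ^ 2 + ‖p 1‖ ^ 2 < 1 }

theorem ConvexOn.add_deriv_mul_sub_le {S : Set ℝ} {f : ℝ → ℝ} {f' x y : ℝ}
    (hfc : ConvexOn ℝ S f) (hx : x ∈ S) (hy : y ∈ S) (hf : HasDerivAt f f' x) :
    f x + f' * (y - x) ≤ f y := by
  rcases lt_trichotomy x y with hxy | rfl | hyx
  · have h := hfc.le_slope_of_hasDerivAt hx hy hxy hf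
    rw [slope_def_field, le_div_iff₀ (sub_pos.mpr hxy)] at h
    linarith
  · simp
  · have h := hfc.slope_le_of_hasDerivAt hy hx hyx hf
    rw [slope_def_field, div_le_iff₀ (sub_pos.mpr hyx)] at h
    linarith

theorem Complex.norm_le_exp_re_of_forall_norm_eq {f h : ℂ → ℂ} (hf : Differentiable ℂ f)
    (hh : Differentiable ℂ h) {r : ℝ} (hr : 0 < r)
    (hbound : ∀ ζ : ℂ, ‖ζ‖ = r → ‖f ζ‖ ≤ Real.exp (h ζ).re) {ζ : ℂ} (hζ : ‖ζ‖ ≤ r) :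
    ‖f ζ‖ ≤ Real.exp (h ζ).re := by
  have hnorm : ∀ ξ, ‖f ξ * Complex.exp (-h ξ)‖ = ‖f ξ‖ / Real.exp (h ξ).re := by
    intro ξ
    rw [norm_mul, Complex.norm_exp, Complex.neg_re, Real.exp_neg, div_eq_mul_inv]
  have hdiff : Differentiable ℂ (fun ξ => f ξ * Complex.exp (-h ξ)) :=
    hf.mul (Complex.differentiable_exp.comp hh.neg)
  have hmax : ‖f ζ * Complex.exp (-h ζ)‖ ≤ 1 := by
    refine Complex.norm_le_of_forall_mem_frontier_norm_le Metric.isBounded_ball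
      hdiff.diffContOnCl (fun ξ hξ => ?_)
      (by rwa [closure_ball 0 hr.ne', mem_closedBall_zero_iff])
    rw [frontier_ball 0 hr.ne', mem_sphere_zero_iff_norm] at hξ
    rw [hnorm, div_le_one (Real.exp_pos _)]
    exact hbound ξ hξ
  rwa [hnorm, div_le_one (Real.exp_pos _)] at hmax

theorem IsPSH.le_of_forall_norm_eq_le {n : ℕ} {Ω : Set (Fin n → ℂ)} {u : (Fin n → ℂ) → EReal}
    (hu : IsPSH Ω u) {z w : Fin n → ℂ} {r : ℝ} (hr : 0 < r)
    (hdisc : ∀ ζ : ℂ, ‖ζ‖ ≤ r → z + ζ • w ∈ Ω) {c : ℝ}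
    (hc : ∀ ζ : ℂ, ‖ζ‖ = r → u (z + ζ • w) ≤ c) {ζ : ℂ} (hζ : ‖ζ‖ ≤ r) :
    u (z + ζ • w) ≤ c := by
  have hz : z ∈ Ω := by simpa using hdisc 0 (by simpa using hr.le)
  simpa using hu.2.2.2 z hz w r hr hdisc (Polynomial.C (c : ℂ)) (by simpa using hc) ζ hζ

theorem norm_one_lt_one_of_mem_unitBall2 {p : Fin 2 → ℂ} (hp : p ∈ unitBall2) : ‖p 1‖ < 1 := by
  have : ‖p 0‖ ^ 2 + ‖p 1‖ ^ 2 < 1 := hp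
  nlinarith [norm_nonneg (p 0), norm_nonneg (p 1)]

namespace UnitBallEnvelope

def base (τ : ℝ) : ℝ := -(1 / 2) * Real.log (1 - Real.exp (2 * τ))

def baseDeriv (τ : ℝ) : ℝ := Real.exp (2 * τ) / (1 - Real.exp (2 * τ))

def profile (α τ : ℝ) : ℝ := base τ ^ α

def profileDeriv (α τ : ℝ) : ℝ := α * base τ ^ (α - 1) * baseDeriv τ

def envelope (α : ℝ) (x : ℂ) : ℝ := (-(1 / 2) * Real.log (1 - ‖x‖ ^ 2)) ^ α

variable {α τ : ℝ}

theorem one_sub_exp_two_mul_pos (hτ : τ < 0) : 0 < 1 - Real.exp (2 * τ) := by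
  have : Real.exp (2 * τ) < 1 := Real.exp_lt_one_iff.mpr (by linarith)
  linarith

theorem base_pos (hτ : τ < 0) : 0 < base τ := by
  have := Real.log_neg (one_sub_exp_two_mul_pos hτ) (by linarith [Real.exp_pos (2 * τ)])
  unfold base; linarith

theorem exp_two_mul_le_two_mul_base (hτ : τ < 0) : Real.exp (2 * τ) ≤ 2 * base τ := by
  have := Real.log_le_sub_one_of_pos (one_sub_exp_two_mul_pos hτ)
  unfold base; linarith

theorem baseDeriv_pos (hτ : τ < 0) : 0 < baseDeriv τ :=
  div_pos (Real.exp_pos _) (one_sub_exp_two_mul_pos hτ)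

theorem profileDeriv_pos (hα : 0 < α) (hτ : τ < 0) : 0 < profileDeriv α τ :=
  mul_pos (mul_pos hα (Real.rpow_pos_of_pos (base_pos hτ) _)) (baseDeriv_pos hτ)

theorem hasDerivAt_exp_two_mul (τ : ℝ) :
    HasDerivAt (fun τ => Real.exp (2 * τ)) (2 * Real.exp (2 * τ)) τ := by
  simpa [mul_comm] using ((hasDerivAt_id τ).const_mul 2).exp

theorem hasDerivAt_base (hτ : τ < 0) : HasDerivAt base (baseDeriv τ) τ := by
  have h := (((hasDerivAt_exp_two_mul τ).const_sub 1).log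
    (one_sub_exp_two_mul_pos hτ).ne').const_mul (-(1 / 2) : ℝ)
  refine h.congr_deriv ?_
  unfold baseDeriv
  field_simp

theorem hasDerivAt_baseDeriv (hτ : τ < 0) :
    HasDerivAt baseDeriv (2 * baseDeriv τ * (1 + baseDeriv τ)) τ := by
  have h := (hasDerivAt_exp_two_mul τ).div ((hasDerivAt_exp_two_mul τ).const_sub 1)
    (one_sub_exp_two_mul_pos hτ).ne'
  refine h.congr_deriv ?_
  have := (one_sub_exp_two_mul_pos hτ).ne'
  unfold baseDeriv
  field_simp
  ring

theorem hasDerivAt_profile (hτ : τ < 0) : HasDerivAt (profile α) (profileDeriv α τ) τ := by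
  show HasDerivAt (fun τ => base τ ^ α) _ τ
  convert (hasDerivAt_base hτ).rpow_const (p := α) (Or.inl (base_pos hτ).ne') using 1
  unfold profileDeriv; ring

theorem hasDerivAt_profileDeriv (hτ : τ < 0) :
    HasDerivAt (profileDeriv α)
      (α * base τ ^ (α - 2) * baseDeriv τ *
        ((α - 1) * baseDeriv τ + 2 * base τ * (1 + baseDeriv τ))) τ := by
  have hpow := (hasDerivAt_base hτ).rpow_const (p := α - 1) (Or.inl (base_pos hτ).ne')
  refine ((hpow.const_mul α).mul (hasDerivAt_baseDeriv hτ)).congr_deriv ?_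
  rw [show α - 1 = α - 2 + 1 by ring, Real.rpow_add (base_pos hτ), Real.rpow_one,
    show α - 2 + 1 - 1 = α - 2 by ring]
  ring

theorem convexOn_profile (hα : 0 ≤ α) : ConvexOn ℝ (Iio 0) (profile α) := by
  refine convexOn_of_hasDerivWithinAt2_nonneg (convex_Iio 0)
    (fun τ hτ => (hasDerivAt_profile hτ).continuousAt.continuousWithinAt)
    (fun τ hτ => (hasDerivAt_profile (by simpa using hτ)).hasDerivWithinAt)
    (fun τ hτ => (hasDerivAt_profileDeriv (by simpa using hτ)).hasDerivWithinAt)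
    (fun τ hτ => ?_)
  rw [interior_Iio] at hτ
  have hw := baseDeriv_pos hτ
  have hq : Real.exp (2 * τ) * (1 + baseDeriv τ) = baseDeriv τ := by
    have := (one_sub_exp_two_mul_pos hτ).ne'
    unfold baseDeriv; field_simp; ring
  -- with `q = exp (2τ)`, `w = baseDeriv τ`: `(α - 1) w + 2 base (1 + w) ≥ (α - 1) w + q (1 + w)`
  -- `= α w` because `-log (1 - q) ≥ q`
  have hfactor : 0 ≤ (α - 1) * baseDeriv τ + 2 * base τ * (1 + baseDeriv τ) := by
    nlinarith [exp_two_mul_le_two_mul_base hτ]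
  have := Real.rpow_pos_of_pos (base_pos hτ) (α - 2)
  positivity

theorem neg_half_mul_log_one_sub_sq_nonneg {x : ℂ} (hx : ‖x‖ < 1) :
    0 ≤ -(1 / 2) * Real.log (1 - ‖x‖ ^ 2) := by
  have : Real.log (1 - ‖x‖ ^ 2) ≤ 0 :=
    Real.log_nonpos (by nlinarith [norm_nonneg x]) (by nlinarith [norm_nonneg x])
  linarith

theorem envelope_nonneg {x : ℂ} (hx : ‖x‖ < 1) : 0 ≤ envelope α x :=
  Real.rpow_nonneg (neg_half_mul_log_one_sub_sq_nonneg hx) α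

theorem envelope_zero (hα : α ≠ 0) : envelope α 0 = 0 := by
  simp [envelope, Real.zero_rpow hα]

theorem profile_log_norm {x : ℂ} (hx : x ≠ 0) : profile α (Real.log ‖x‖) = envelope α x := by
  have hsq : Real.exp (2 * Real.log ‖x‖) = ‖x‖ ^ 2 := by
    rw [← Real.exp_log (pow_pos (norm_pos_iff.mpr hx) 2), Real.log_pow]
    norm_num
  rw [profile, base, envelope, hsq]

theorem continuousOn_envelope (hα : 0 ≤ α) : ContinuousOn (envelope α) {x | ‖x‖ < 1} := by
  intro x hx
  have hpos : 0 < 1 - ‖x‖ ^ 2 := by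
    have : ‖x‖ < 1 := hx
    nlinarith [norm_nonneg x]
  refine ContinuousAt.continuousWithinAt ?_
  refine ((continuousAt_const.mul ?_)).rpow_const (Or.inr hα)
  exact (continuous_const.sub (continuous_norm.pow 2)).continuousAt.log hpos.ne'

theorem log_norm_tangent_le_envelope (hα : 0 ≤ α) {τ₀ : ℝ} (hτ₀ : τ₀ < 0) {x : ℂ} (hx0 : x ≠ 0)
    (hx1 : ‖x‖ < 1) :
    profile α τ₀ + profileDeriv α τ₀ * (Real.log ‖x‖ - τ₀) ≤ envelope α x := by
  rw [← profile_log_norm hx0]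
  exact (convexOn_profile hα).add_deriv_mul_sub_le hτ₀
    (Real.log_neg (norm_pos_iff.mpr hx0) hx1) (hasDerivAt_profile hτ₀)

theorem envelope_le_re_of_forall_norm_eq (hα : 0 < α) {g h : ℂ → ℂ} (hg : Differentiable ℂ g)
    (hh : Differentiable ℂ h) {r : ℝ} (hr : 0 < r) (hg1 : ∀ ζ : ℂ, ‖ζ‖ ≤ r → ‖g ζ‖ < 1)
    (hbound : ∀ ζ : ℂ, ‖ζ‖ = r → envelope α (g ζ) ≤ (h ζ).re) {ζ : ℂ} (hζ : ‖ζ‖ ≤ r) :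
    envelope α (g ζ) ≤ (h ζ).re := by
  by_cases hgζ : g ζ = 0
  · rw [hgζ, envelope_zero hα.ne', ← Real.one_le_exp_iff]
    have hconst : ∀ ξ : ℂ, ‖ξ‖ = r → ‖(1 : ℂ)‖ ≤ Real.exp (h ξ).re := fun ξ hξ => by
      rw [norm_one, Real.one_le_exp_iff]
      exact (envelope_nonneg (hg1 ξ hξ.le)).trans (hbound ξ hξ)
    simpa using Complex.norm_le_exp_re_of_forall_norm_eq (differentiable_const 1) hh hr hconst hζ
  set τ₀ := Real.log ‖g ζ‖
  have hτ₀ : τ₀ < 0 := Real.log_neg (norm_pos_iff.mpr hgζ) (hg1 ζ hζ)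
  set a := profileDeriv α τ₀
  set b := profile α τ₀ - a * τ₀
  have ha : 0 < a := profileDeriv_pos hα hτ₀
  have htangent : ∀ x : ℂ, ‖x‖ < 1 → ‖x‖ ≤ Real.exp ((envelope α x - b) / a) := by
    intro x hx1
    rcases eq_or_ne x 0 with rfl | hx0
    · simpa using (Real.exp_pos _).le
    rw [← Real.log_le_iff_le_exp (norm_pos_iff.mpr hx0), le_div_iff₀ ha]
    have := log_norm_tangent_le_envelope hα.le hτ₀ hx0 hx1
    linarith
  have hre : ∀ ξ : ℂ, ((h ξ - b) / a).re = ((h ξ).re - b) / a := fun ξ => by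
    simp [Complex.div_ofReal_re]
  have hmax := Complex.norm_le_exp_re_of_forall_norm_eq hg (hh.sub_const _ |>.div_const _) hr
    (fun ξ hξ => (htangent _ (hg1 ξ hξ.le)).trans <| by
      rw [hre, Real.exp_le_exp]
      exact div_le_div_of_nonneg_right (by linarith [hbound ξ hξ]) ha.le) hζ
  rw [hre, ← Real.log_le_iff_le_exp (norm_pos_iff.mpr hgζ), le_div_iff₀ ha] at hmax
  rw [← profile_log_norm hgζ]
  linarith

theorem isPSH_envelope (hα : 0 < α) : IsPSH unitBall2 (fun p => (envelope α (p 1) : EReal)) := by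
  refine ⟨?_, fun _ _ => EReal.coe_ne_top _, ⟨0, by simp [unitBall2], EReal.coe_ne_bot _⟩, ?_⟩
  · exact (continuous_coe_real_ereal.comp_continuousOn ((continuousOn_envelope hα.le).comp
      (continuous_apply 1).continuousOn fun p hp => norm_one_lt_one_of_mem_unitBall2 hp))
      |>.upperSemicontinuousOn
  · intro z _ w r hr hdisc P hcirc ζ hζ
    have hline : ∀ ξ : ℂ, (z + ξ • w) 1 = z 1 + ξ * w 1 := fun ξ => by simp
    simp only [hline, EReal.coe_le_coe_iff] at hcirc ⊢
    exact envelope_le_re_of_forall_norm_eq hα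
      ((differentiable_const _).add (differentiable_id.mul_const _)) P.differentiable hr
      (fun ξ hξ => hline ξ ▸ norm_one_lt_one_of_mem_unitBall2 (hdisc ξ hξ)) hcirc hζ

theorem envelope_le_neg_log_rpow (hα : 0 ≤ α) {p : Fin 2 → ℂ} (hp : p ∈ unitBall2)
    (hp0 : p 0 ≠ 0) : envelope α (p 1) ≤ (-Real.log ‖p 0‖) ^ α := by
  have hp' : ‖p 0‖ ^ 2 + ‖p 1‖ ^ 2 < 1 := hp
  have hlog : Real.log (‖p 0‖ ^ 2) ≤ Real.log (1 - ‖p 1‖ ^ 2) :=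
    Real.log_le_log (by positivity) (by linarith)
  rw [Real.log_pow] at hlog
  refine Real.rpow_le_rpow (neg_half_mul_log_one_sub_sq_nonneg
    (norm_one_lt_one_of_mem_unitBall2 hp)) ?_ hα
  push_cast at hlog
  linarith

theorem le_envelope_of_isPSH (hα : 0 ≤ α) {u : (Fin 2 → ℂ) → EReal} (hu : IsPSH unitBall2 u)
    (hle : ∀ q ∈ unitBall2, q 0 ≠ 0 → u q ≤ ((-Real.log ‖q 0‖) ^ α : ℝ))
    {p : Fin 2 → ℂ} (hp : p ∈ unitBall2) : u p ≤ envelope α (p 1) := by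
  have hp' : ‖p 0‖ ^ 2 + ‖p 1‖ ^ 2 < 1 := hp
  have hpos : 0 < 1 - ‖p 1‖ ^ 2 := by nlinarith [norm_nonneg (p 0)]
  set R := Real.sqrt (1 - ‖p 1‖ ^ 2)
  have hR2 : R ^ 2 = 1 - ‖p 1‖ ^ 2 := Real.sq_sqrt hpos.le
  have hp0R : ‖p 0‖ < R := by nlinarith [norm_nonneg (p 0), Real.sqrt_nonneg (1 - ‖p 1‖ ^ 2)]
  set c : Fin 2 → ℂ := Function.update p 0 0
  set e : Fin 2 → ℂ := Pi.single 0 1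
  have hc0 : ∀ ζ : ℂ, (c + ζ • e) 0 = ζ := fun ζ => by simp [c, e]
  have hc1 : ∀ ζ : ℂ, (c + ζ • e) 1 = p 1 := fun ζ => by simp [c, e]
  have hdisc : ∀ r < R, ∀ ζ : ℂ, ‖ζ‖ ≤ r → c + ζ • e ∈ unitBall2 := fun r hrR ζ hζ => by
    show ‖(c + ζ • e) 0‖ ^ 2 + ‖(c + ζ • e) 1‖ ^ 2 < 1
    rw [hc0, hc1]
    nlinarith [norm_nonneg ζ]
  have hcircle : ∀ r ∈ Ioo ‖p 0‖ R, u p ≤ ((-Real.log r) ^ α : ℝ) := fun r ⟨hr0, hrR⟩ => by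
    have hr : 0 < r := (norm_nonneg _).trans_lt hr0
    have hp_eq : c + p 0 • e = p := by
      ext i; fin_cases i <;> simp [c, e]
    rw [← hp_eq]
    refine hu.le_of_forall_norm_eq_le hr (hdisc r hrR) (fun ζ hζ => ?_) hr0.le
    have hζ0 : ζ ≠ 0 := by rintro rfl; simp [hr.ne] at hζ
    simpa [hc0, hζ] using hle _ (hdisc r hrR ζ hζ.le) (by rwa [hc0])
  have hR : -Real.log R = -(1 / 2) * Real.log (1 - ‖p 1‖ ^ 2) := by
    rw [Real.log_sqrt hpos.le]; ring
  have hlim : Tendsto (fun r : ℝ => (((-Real.log r) ^ α : ℝ) : EReal)) (𝓝[<] R)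
      (𝓝 (envelope α (p 1))) := by
    have hR0 : 0 < R := (norm_nonneg _).trans_lt hp0R
    rw [envelope, ← hR]
    exact (continuous_coe_real_ereal.continuousAt.comp
      (((Real.continuousAt_log hR0.ne').neg).rpow_const (Or.inr hα))).tendsto.mono_left
      nhdsWithin_le_nhds
  exact ge_of_tendsto hlim (eventually_of_mem (Ioo_mem_nhdsLT hp0R) hcircle)

end UnitBallEnvelope

theorem statement18_general (α : ℝ) (hα0 : 0 < α)
    (φ U : (Fin 2 → ℂ) → EReal)
    (hφ : ∀ p : Fin 2 → ℂ,
      φ p = if p 0 = 0 then (⊤ : EReal) else (((-Real.log ‖p 0‖) ^ α : ℝ) : EReal))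
    (hU : ∀ p : Fin 2 → ℂ,
      U p = ((((-(1 / 2 : ℝ)) * Real.log (1 - ‖p 1‖ ^ 2)) ^ α : ℝ) : EReal)) :
    (∀ p ∈ unitBall2,
      sSup { y | ∃ u, IsPSH unitBall2 u ∧ (∀ q ∈ unitBall2, u q ≤ φ q) ∧ y = u p }
        = U p) ∧
    IsPSH unitBall2 U ∧
    (∀ u, IsPSH unitBall2 u → (∀ p ∈ unitBall2, u p ≤ φ p) →
      ∀ p ∈ unitBall2, u p ≤ U p) := by
  open UnitBallEnvelope in
  have hUeq : U = fun p => (envelope α (p 1) : EReal) := funext hU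
  subst hUeq
  have hUφ : ∀ q ∈ unitBall2, (envelope α (q 1) : EReal) ≤ φ q := fun q hq => by
    rw [hφ]
    split_ifs with hq0
    · exact le_top
    · exact EReal.coe_le_coe (envelope_le_neg_log_rpow hα0.le hq hq0)
  have hmax : ∀ u, IsPSH unitBall2 u → (∀ p ∈ unitBall2, u p ≤ φ p) →
      ∀ p ∈ unitBall2, u p ≤ envelope α (p 1) := fun u hu hle p hp =>
    le_envelope_of_isPSH hα0.le hu (fun q hq hq0 => by simpa [hφ, hq0] using hle q hq) hp
  refine ⟨fun p hp => le_antisymm ?_ ?_, isPSH_envelope hα0, hmax⟩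
  · exact sSup_le fun y ⟨u, hu, hle, hy⟩ => hy ▸ hmax u hu hle p hp
  · exact le_sSup ⟨_, isPSH_envelope hα0, hUφ, rfl⟩

/-- Example 4.10: on the unit ball `𝔹 ⊆ ℂ²`, for `0 < α ≤ 1` and
`φ(z, w) = (−log|z|)^α` (equal to `+∞` when `z = 0`), the Perron–Bremermann envelope of `φ`
over the plurisubharmonic functions on `𝔹` equals `U(z, w) = (−(1/2)·log(1 − |w|²))^α` on
`𝔹`. In particular `U` is plurisubharmonic on `𝔹`, and every plurisubharmonic `u ≤ φ` on
`𝔹` satisfies `u ≤ U` on `𝔹`. -/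
theorem statement18 (α : ℝ) (hα0 : 0 < α) (hα1 : α ≤ 1)
    (φ U : (Fin 2 → ℂ) → EReal)
    (hφ : ∀ p : Fin 2 → ℂ,
      φ p = if p 0 = 0 then (⊤ : EReal) else (((-Real.log ‖p 0‖) ^ α : ℝ) : EReal))
    (hU : ∀ p : Fin 2 → ℂ,
      U p = ((((-(1 / 2 : ℝ)) * Real.log (1 - ‖p 1‖ ^ 2)) ^ α : ℝ) : EReal)) :
    (∀ p ∈ unitBall2,
      sSup { y | ∃ u, IsPSH unitBall2 u ∧ (∀ q ∈ unitBall2, u q ≤ φ q) ∧ y = u p }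
        = U p) ∧
    IsPSH unitBall2 U ∧
    (∀ u, IsPSH unitBall2 u → (∀ p ∈ unitBall2, u p ≤ φ p) →
      ∀ p ∈ unitBall2, u p ≤ U p) :=
  statement18_general α hα0 φ U hφ hU
end
end
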